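/- Let s be a positive integer and let G_1, …, G_{2s} be graphs on a common vertex set of size 4s + 1 such that each G_i is triangle-free and not bipartite, and every pair of distinct vertices is an edge of at least s of the graphs G_1, …, G_{2s}. Then s ≤ 1. -/

import Mathlib

open Finset
open scoped Classical

section NbcAux

variable {V : Type*} {G : SimpleGraph V}

lemma exists_walk_getVert {u v : V} (p : G.Walk u v) :
    ∀ i j : ℕ, i ≤ j → j ≤ p.length →
    ∃ q : G.Walk (p.getVert i) (p.getVert j), q.length = j - i := by
  induction p with
  | nil =>
    intro i j hij hj
    simp only [SimpleGraph.Walk.length_nil, Nat.le_zero] at hj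
    subst hj
    interval_cases i
    exact ⟨.nil, rfl⟩
  | @cons a b c h p ih =>
    intro i j hij hj
    match i, j with
    | 0, 0 => exact ⟨.nil, rfl⟩
    | 0, (k+1) =>
      obtain ⟨q, hq⟩ := ih 0 k (Nat.zero_le _) (by simpa [Nat.succ_le_succ_iff] using hj)
      have hl : (q.copy (p.getVert_zero) rfl).length = k := by
        rw [SimpleGraph.Walk.length_copy, hq, Nat.sub_zero]
      exact ⟨.cons h (q.copy (p.getVert_zero) rfl), (congrArg (· + 1) hl).trans (by omega)⟩
    | (i+1), (j+1) =>
      obtain ⟨q, hq⟩ := ih i j (by omega) (by simpa [Nat.succ_le_succ_iff] using hj)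
      exact ⟨q, by simpa using hq⟩

lemma exists_odd_loop (h : ¬ G.Colorable 2) : ∃ (u : V) (p : G.Walk u u), Odd p.length := by
  by_contra hno
  push_neg at hno
  simp only [Nat.not_odd_iff_even] at hno
  apply h
  have key : ∀ (a b : V) (p q : G.Walk a b), (Even p.length ↔ Even q.length) := by
    intro a b p q
    have h2 : Even ((p.append q.reverse).length) := hno a _
    rw [SimpleGraph.Walk.length_append, SimpleGraph.Walk.length_reverse] at h2
    exact Nat.even_add.mp h2
  have reach : ∀ v : V, G.Reachable (G.connectedComponentMk v).out v := by
    intro v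
    apply SimpleGraph.ConnectedComponent.exact
    exact Quot.out_eq _
  let wk : ∀ v : V, G.Walk (G.connectedComponentMk v).out v := fun v => (reach v).some
  let c : V → Bool := fun v => decide (Even (wk v).length)
  have valid : ∀ {u v : V}, G.Adj u v → c u ≠ c v := by
    intro u v huv
    have hrep : (G.connectedComponentMk u).out = (G.connectedComponentMk v).out := by
      rw [SimpleGraph.ConnectedComponent.eq.mpr huv.reachable]
    have hkey := key _ v (((wk u).concat huv).copy hrep rfl) (wk v)
    rw [SimpleGraph.Walk.length_copy, SimpleGraph.Walk.length_concat,
      Nat.even_add_one] at hkey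
    simp only [c, ne_eq, decide_eq_decide]
    tauto
  have col : G.Coloring Bool := SimpleGraph.Coloring.mk c (fun hadj => valid hadj)
  have : G.Colorable (Fintype.card Bool) := col.colorable
  simpa using this

variable [Fintype V]

lemma mantel_finset (htf : G.CliqueFree 3) (A : Finset V) :
    4 * (G.edgeFinset.filter fun e => ∀ x ∈ e, x ∈ A).card ≤ A.card ^ 2 := by
  induction A using Finset.strongInduction with
  | _ A ih =>
  by_cases hne : (G.edgeFinset.filter fun e => ∀ x ∈ e, x ∈ A).Nonempty
  · obtain ⟨e, he⟩ := hne
    rw [mem_filter] at he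
    obtain ⟨heE, heA⟩ := he
    obtain ⟨⟨a, b⟩, rfl⟩ := e.exists_rep
    have hadj : G.Adj a b := by
      rwa [SimpleGraph.mem_edgeFinset, SimpleGraph.mem_edgeSet] at heE
    have hab : a ≠ b := hadj.ne
    have haA : a ∈ A := heA a (by simp)
    have hbA : b ∈ A := heA b (by simp [Sym2.mem_iff])
    set A' : Finset V := A \ {a, b} with hA'
    have hpair : ({a, b} : Finset V) ⊆ A := by
      intro x hx; simp at hx; rcases hx with rfl | rfl <;> assumption
    have hss : A' ⊂ A := Finset.sdiff_ssubset hpair ⟨a, by simp⟩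
    have hcard' : A'.card = A.card - 2 := by
      rw [hA', Finset.card_sdiff_of_subset hpair, Finset.card_pair hab]
    have IH := ih A' hss
    set X := (G.edgeFinset.filter fun e => ∀ x ∈ e, x ∈ A) \
      (G.edgeFinset.filter fun e => ∀ x ∈ e, x ∈ A') with hX
    have hsplit : (G.edgeFinset.filter fun e => ∀ x ∈ e, x ∈ A).card ≤
        (G.edgeFinset.filter fun e => ∀ x ∈ e, x ∈ A').card + X.card := by
      rw [hX]
      have : (G.edgeFinset.filter fun e => ∀ x ∈ e, x ∈ A) ⊆
          (G.edgeFinset.filter fun e => ∀ x ∈ e, x ∈ A') ∪ X := by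
        intro e' he'
        by_cases h2 : e' ∈ G.edgeFinset.filter fun e => ∀ x ∈ e, x ∈ A'
        · exact Finset.mem_union_left _ h2
        · exact Finset.mem_union_right _ (Finset.mem_sdiff.mpr ⟨he', h2⟩)
      exact le_trans (Finset.card_le_card this) (Finset.card_union_le _ _)
    -- bound on X
    set img1 := (A ∩ G.neighborFinset a).image (fun x => s(a, x)) with himg1
    set img2 := (A ∩ G.neighborFinset b).image (fun x => s(b, x)) with himg2
    have hXsub : X ⊆ img1 ∪ img2 := by
      intro e' he'
      rw [hX, Finset.mem_sdiff, mem_filter, mem_filter] at he'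
      obtain ⟨⟨heE', heA'⟩, hnot⟩ := he'
      have : ∃ x ∈ e', x ∉ A' := by
        by_contra hc
        push_neg at hc
        exact hnot ⟨heE', hc⟩
      obtain ⟨x, hxe, hxA'⟩ := this
      have hxab : x = a ∨ x = b := by
        rw [hA', Finset.mem_sdiff] at hxA'
        push_neg at hxA'
        have := hxA' (heA' x hxe)
        simpa using this
      obtain ⟨y, rfl⟩ := (Sym2.mem_iff_exists).mp hxe
      have hyA : y ∈ A := heA' y (by simp [Sym2.mem_iff])
      have hxy : G.Adj x y := by
        rwa [SimpleGraph.mem_edgeFinset, SimpleGraph.mem_edgeSet] at heE'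
      rcases hxab with rfl | rfl
      · exact Finset.mem_union_left _ (Finset.mem_image.mpr
          ⟨y, by simp [hyA, SimpleGraph.mem_neighborFinset, hxy], rfl⟩)
      · exact Finset.mem_union_right _ (Finset.mem_image.mpr
          ⟨y, by simp [hyA, SimpleGraph.mem_neighborFinset, hxy], rfl⟩)
    have habmem : s(a, b) ∈ img1 ∩ img2 := by
      rw [Finset.mem_inter]
      constructor
      · exact Finset.mem_image.mpr ⟨b, by simp [hbA, SimpleGraph.mem_neighborFinset, hadj], rfl⟩
      · exact Finset.mem_image.mpr ⟨a, by
          simp [haA, SimpleGraph.mem_neighborFinset, hadj.symm], Sym2.eq_swap⟩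
    have hdisj : Disjoint (A ∩ G.neighborFinset a) (A ∩ G.neighborFinset b) := by
      rw [Finset.disjoint_left]
      intro x hx1 hx2
      simp only [Finset.mem_inter, SimpleGraph.mem_neighborFinset] at hx1 hx2
      exact htf {a, b, x} ((SimpleGraph.is3Clique_triple_iff).mpr ⟨hadj, hx1.2, hx2.2⟩)
    have hXcard : X.card + 1 ≤ A.card := by
      have h1 : X.card ≤ (img1 ∪ img2).card := Finset.card_le_card hXsub
      have h2 : 1 ≤ (img1 ∩ img2).card := Finset.card_pos.mpr ⟨_, habmem⟩
      have h3 : (img1 ∪ img2).card + (img1 ∩ img2).card = img1.card + img2.card :=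
        Finset.card_union_add_card_inter _ _
      have h4 : img1.card ≤ (A ∩ G.neighborFinset a).card := Finset.card_image_le
      have h5 : img2.card ≤ (A ∩ G.neighborFinset b).card := Finset.card_image_le
      have h6 : (A ∩ G.neighborFinset a).card + (A ∩ G.neighborFinset b).card =
          ((A ∩ G.neighborFinset a) ∪ (A ∩ G.neighborFinset b)).card :=
        (Finset.card_union_of_disjoint hdisj).symm
      have h7 : ((A ∩ G.neighborFinset a) ∪ (A ∩ G.neighborFinset b)).card ≤ A.card := by
        apply Finset.card_le_card
        intro x hx
        rcases Finset.mem_union.mp hx with h | h <;> exact (Finset.mem_inter.mp h).1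
      omega
    have hm : 2 ≤ A.card := by
      have := Finset.card_le_card hpair
      rwa [Finset.card_pair hab] at this
    obtain ⟨k, hk⟩ : ∃ k, A.card = k + 2 := ⟨A.card - 2, by omega⟩
    rw [hcard', hk] at IH
    simp only [Nat.add_sub_cancel] at IH
    rw [hk]
    nlinarith [IH, hsplit, hXcard, hk]
  · rw [Finset.not_nonempty_iff_eq_empty] at hne
    rw [hne]
    simp

lemma edge_bound (htf : G.CliqueFree 3) (hnb : ¬ G.Colorable 2) :
    ∃ L, Odd L ∧ 5 ≤ L ∧ L ≤ Fintype.card V ∧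
      4 * G.edgeFinset.card + 4 * L ≤ 8 * Fintype.card V + (Fintype.card V - L) ^ 2 := by
  have hex : ∃ m, Odd m ∧ ∃ (u : V) (p : G.Walk u u), p.length = m := by
    obtain ⟨u, p, hp⟩ := exists_odd_loop hnb
    exact ⟨p.length, hp, u, p, rfl⟩
  set L := Nat.find hex with hLdef
  obtain ⟨hLodd, u, p, hplen⟩ := Nat.find_spec hex
  have hmin : ∀ m, m < L → ¬(Odd m ∧ ∃ (u : V) (q : G.Walk u u), q.length = m) :=
    fun m hm => Nat.find_min hex hm
  -- minimal odd closed walk helper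
  have hmin' : ∀ (w : V) (q : G.Walk w w), Odd q.length → L ≤ q.length := by
    intro w q hq
    by_contra hc
    exact hmin q.length (by omega) ⟨hq, w, q, rfl⟩
  rw [← hLdef] at hLodd hplen
  clear_value L
  have hL5 : 5 ≤ L := by
    have h1 : L ≠ 1 := by
      intro h1
      have h0 : (0 : ℕ) < p.length := by omega
      have := p.adj_getVert_succ h0
      rw [p.getVert_zero, p.getVert_of_length_le (by omega)] at this
      exact G.irrefl this
    have h3 : L ≠ 3 := by
      intro h3
      have ha : G.Adj u (p.getVert 1) := by
        have := p.adj_getVert_succ (show 0 < p.length by omega)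
        rwa [p.getVert_zero] at this
      have hb : G.Adj (p.getVert 1) (p.getVert 2) :=
        p.adj_getVert_succ (show 1 < p.length by omega)
      have hc : G.Adj (p.getVert 2) u := by
        have := p.adj_getVert_succ (show 2 < p.length by omega)
        rwa [show (2 : ℕ) + 1 = 3 from rfl, ← h3, ← hplen, p.getVert_length] at this
      exact htf {u, p.getVert 1, p.getVert 2}
        ((SimpleGraph.is3Clique_triple_iff).mpr ⟨ha, hc.symm, hb⟩)
    obtain ⟨k, hk⟩ := hLodd
    have : 1 ≤ L := by
      rcases Nat.eq_zero_or_pos L with h | h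
      · exfalso; omega
      · exact h
    omega
  -- arcs between getVerts, as closed walk lengths
  have arc1 : ∀ i j : ℕ, i ≤ j → j ≤ L →
      ∃ q : G.Walk (p.getVert i) (p.getVert j), q.length = j - i := by
    intro i j hij hj
    exact exists_walk_getVert p i j hij (by omega)
  have arc2 : ∀ i j : ℕ, i ≤ j → j ≤ L →
      ∃ q : G.Walk (p.getVert j) (p.getVert i), q.length = i + (L - j) := by
    intro i j hij hj
    obtain ⟨qa, hqa⟩ := exists_walk_getVert p 0 i (by omega) (by omega)
    obtain ⟨qb, hqb⟩ := exists_walk_getVert p j L (by omega) (by omega)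
    have hgl : p.getVert L = u := by rw [← hplen, p.getVert_length]
    have hg0 : p.getVert 0 = u := p.getVert_zero
    refine ⟨(qb.copy rfl hgl).append (qa.copy hg0 rfl), ?_⟩
    rw [SimpleGraph.Walk.length_append, SimpleGraph.Walk.length_copy,
      SimpleGraph.Walk.length_copy, hqa, hqb]
    omega
  -- injectivity of getVert on [0, L)
  have inj : ∀ i j : ℕ, i < L → j < L → p.getVert i = p.getVert j → i = j := by
    have key : ∀ i j : ℕ, i < j → j < L → p.getVert i ≠ p.getVert j := by
      intro i j hij hjL heq
      obtain ⟨q1, hq1⟩ := arc1 i j (by omega) (by omega)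
      obtain ⟨q2, hq2⟩ := arc2 i j (by omega) (by omega)
      have hodd : Odd (j - i) ∨ Odd (i + (L - j)) := by
        obtain ⟨k, hk⟩ := hLodd
        rcases Nat.even_or_odd (j - i) with h | h
        · right
          obtain ⟨a, ha⟩ := h
          refine ⟨k - a, by omega⟩
        · left; exact h
      rcases hodd with h | h
      · have := hmin' _ (q1.copy rfl heq.symm) (by rwa [SimpleGraph.Walk.length_copy, hq1])
        rw [SimpleGraph.Walk.length_copy, hq1] at this
        omega
      · have := hmin' _ (q2.copy heq.symm rfl) (by rwa [SimpleGraph.Walk.length_copy, hq2])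
        rw [SimpleGraph.Walk.length_copy, hq2] at this
        omega
    intro i j hi hj heq
    rcases Nat.lt_trichotomy i j with h | h | h
    · exact absurd heq (key i j h hj)
    · exact h
    · exact absurd heq.symm (key j i h hi)
  -- the cycle vertex set
  set T : Finset V := (Finset.range L).image p.getVert with hT
  have hTcard : T.card = L := by
    rw [hT, Finset.card_image_of_injOn, Finset.card_range]
    intro i hi j hj
    exact inj i j (Finset.mem_range.mp hi) (Finset.mem_range.mp hj)
  have hTsub : T.card ≤ Fintype.card V := by
    rw [← Finset.card_univ]
    exact Finset.card_le_card (Finset.subset_univ _)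
  -- every vertex has at most 2 neighbors in T
  have hnbr : ∀ v : V, (T.filter (G.Adj v)).card ≤ 2 := by
    intro v
    have key : ∀ a b : ℕ, a < b → b < L → G.Adj v (p.getVert a) → G.Adj v (p.getVert b) →
        b - a = 2 ∨ b - a = L - 2 := by
      intro a b hab hbL hva hvb
      obtain ⟨q1, hq1⟩ := arc1 a b (by omega) (by omega)
      obtain ⟨q2, hq2⟩ := arc2 a b (by omega) (by omega)
      have hodd : Odd (b - a) ∨ Odd (a + (L - b)) := by
        obtain ⟨k, hk⟩ := hLodd
        rcases Nat.even_or_odd (b - a) with h | h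
        · right
          obtain ⟨c, hc⟩ := h
          exact ⟨k - c, by omega⟩
        · left; exact h
      rcases hodd with h | h
      · -- closed walk at v : v -> getVert a -> getVert b -> v,  length (b-a) + 2
        have hw := hmin' v (SimpleGraph.Walk.cons hva (q1.append (SimpleGraph.Walk.cons hvb.symm SimpleGraph.Walk.nil)))
        simp only [SimpleGraph.Walk.length_cons, SimpleGraph.Walk.length_append,
          SimpleGraph.Walk.length_nil, hq1] at hw
        have hwlen := hw (by
          obtain ⟨c, hc⟩ := h
          exact ⟨c + 1, by omega⟩)
        obtain ⟨k, hk⟩ := hLodd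
        obtain ⟨c, hc⟩ := h
        right; omega
      · have hw := hmin' v (SimpleGraph.Walk.cons hvb (q2.append (SimpleGraph.Walk.cons hva.symm SimpleGraph.Walk.nil)))
        simp only [SimpleGraph.Walk.length_cons, SimpleGraph.Walk.length_append,
          SimpleGraph.Walk.length_nil, hq2] at hw
        have hwlen := hw (by
          obtain ⟨c, hc⟩ := h
          exact ⟨c + 1, by omega⟩)
        obtain ⟨k, hk⟩ := hLodd
        obtain ⟨c, hc⟩ := h
        left; omega
    have pair : ∀ a b : ℕ, a < L → b < L → a ≠ b →
        G.Adj v (p.getVert a) → G.Adj v (p.getVert b) →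
        b - a = 2 ∨ b - a = L - 2 ∨ a - b = 2 ∨ a - b = L - 2 := by
      intro a b ha hb hne hva hvb
      rcases Nat.lt_or_ge a b with h | h
      · rcases key a b h hb hva hvb with h1 | h1
        · exact Or.inl h1
        · exact Or.inr (Or.inl h1)
      · have h' : b < a := by omega
        rcases key b a h' ha hvb hva with h1 | h1
        · exact Or.inr (Or.inr (Or.inl h1))
        · exact Or.inr (Or.inr (Or.inr h1))
    by_contra hc
    push_neg at hc
    obtain ⟨Y, hYsub, hYcard⟩ := Finset.exists_subset_card_eq (n := 3) hc
    obtain ⟨x, y, z, hxy, hxz, hyz, hYeq⟩ := Finset.card_eq_three.mp hYcard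
    have hmem : ∀ w ∈ Y, ∃ a, a < L ∧ p.getVert a = w ∧ G.Adj v w := by
      intro w hw
      have := hYsub hw
      rw [Finset.mem_filter, hT, Finset.mem_image] at this
      obtain ⟨⟨a, ha, haw⟩, hadj⟩ := this
      exact ⟨a, Finset.mem_range.mp ha, haw, hadj⟩
    obtain ⟨a, haL, hax, hvx⟩ := hmem x (by rw [hYeq]; simp)
    obtain ⟨b, hbL, hby, hvy⟩ := hmem y (by rw [hYeq]; simp)
    obtain ⟨c, hcL, hcz, hvz⟩ := hmem z (by rw [hYeq]; simp)
    have hab : a ≠ b := fun h => hxy (by rw [← hax, ← hby, h])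
    have hac : a ≠ c := fun h => hxz (by rw [← hax, ← hcz, h])
    have hbc : b ≠ c := fun h => hyz (by rw [← hby, ← hcz, h])
    have p1 := pair a b haL hbL hab (hax ▸ hvx) (hby ▸ hvy)
    have p2 := pair b c hbL hcL hbc (hby ▸ hvy) (hcz ▸ hvz)
    have p3 := pair a c haL hcL hac (hax ▸ hvx) (hcz ▸ hvz)
    obtain ⟨k, hk⟩ := hLodd
    omega
  -- edge sets
  set Ein : Finset (Sym2 V) := G.edgeFinset.filter (fun e => ∀ x ∈ e, x ∈ T) with hEin
  set E1 : Finset (Sym2 V) := G.edgeFinset.filter (fun e => ∃ x ∈ e, x ∈ T) with hE1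
  set Eout : Finset (Sym2 V) := G.edgeFinset.filter (fun e => ¬ ∃ x ∈ e, x ∈ T) with hEout
  have hpart : E1.card + Eout.card = G.edgeFinset.card :=
    Finset.card_filter_add_card_filter_not _
  -- Ein has at least L edges
  have hEinL : L ≤ Ein.card := by
    have hgvT : ∀ m : ℕ, m ≤ L → p.getVert m ∈ T := by
      intro m hm
      rcases Nat.lt_or_ge m L with h | h
      · rw [hT, Finset.mem_image]
        exact ⟨m, Finset.mem_range.mpr h, rfl⟩
      · have hmL : m = L := by omega
        have : p.getVert m = p.getVert 0 := by
          rw [hmL, p.getVert_zero, ← hplen, p.getVert_length]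
        rw [this, hT, Finset.mem_image]
        exact ⟨0, Finset.mem_range.mpr (by omega), rfl⟩
    have hmaps : ∀ i ∈ Finset.range L, s(p.getVert i, p.getVert (i + 1)) ∈ Ein := by
      intro i hi
      rw [Finset.mem_range] at hi
      rw [hEin, Finset.mem_filter]
      constructor
      · rw [SimpleGraph.mem_edgeFinset, SimpleGraph.mem_edgeSet]
        exact p.adj_getVert_succ (by omega)
      · intro x hx
        rcases Sym2.mem_iff.mp hx with rfl | rfl
        · exact hgvT i (by omega)
        · exact hgvT (i + 1) (by omega)
    have hwrap : ∀ i : ℕ, i ≤ L → p.getVert i = p.getVert (i % L) := by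
      intro i hi
      rcases Nat.lt_or_ge i L with h | h
      · rw [Nat.mod_eq_of_lt h]
      · have : i = L := by omega
        subst this
        rw [Nat.mod_self, p.getVert_zero, ← hplen, p.getVert_length]
    have hinj : Set.InjOn (fun i => s(p.getVert i, p.getVert (i + 1))) (Finset.range L) := by
      intro i hi j hj heq
      rw [Finset.coe_range, Set.mem_Iio] at hi hj
      simp only [Sym2.eq_iff] at heq
      rcases heq with ⟨h1, _⟩ | ⟨h1, h2⟩
      · exact inj i j hi hj h1
      · exfalso
        rw [hwrap (j + 1) (by omega)] at h1
        rw [hwrap (i + 1) (by omega)] at h2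
        have e1 : i = (j + 1) % L := inj i _ hi (Nat.mod_lt _ (by omega)) h1
        have e2 : (i + 1) % L = j := (inj _ j (Nat.mod_lt _ (by omega)) hj h2).symm ▸ rfl
        have e2' : (i + 1) % L = j := by
          exact inj _ j (Nat.mod_lt _ (by omega)) hj h2
        rcases Nat.lt_or_ge (j + 1) L with h | h
        · rw [Nat.mod_eq_of_lt h] at e1
          rcases Nat.lt_or_ge (i + 1) L with h' | h'
          · rw [Nat.mod_eq_of_lt h'] at e2'
            omega
          · have : i + 1 = L := by omega
            rw [this, Nat.mod_self] at e2'
            omega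
        · have : j + 1 = L := by omega
          rw [this, Nat.mod_self] at e1
          rcases Nat.lt_or_ge (i + 1) L with h' | h'
          · rw [Nat.mod_eq_of_lt h'] at e2'
            omega
          · have h'' : i + 1 = L := by omega
            rw [h'', Nat.mod_self] at e2'
            omega
    calc L = (Finset.range L).card := (Finset.card_range L).symm
    _ ≤ Ein.card := Finset.card_le_card_of_injOn _ hmaps hinj
  -- degree sum over T
  have hdegsum : ∑ t ∈ T, G.degree t ≤ 2 * Fintype.card V := by
    have h1 : ∀ t : V, G.degree t = ∑ v : V, if G.Adj v t then 1 else 0 := by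
      intro t
      rw [← SimpleGraph.card_neighborFinset_eq_degree]
      have : G.neighborFinset t = Finset.univ.filter (fun v => G.Adj v t) := by
        ext v
        simp [SimpleGraph.mem_neighborFinset, SimpleGraph.adj_comm]
      rw [this, Finset.card_filter]
    calc ∑ t ∈ T, G.degree t = ∑ t ∈ T, ∑ v : V, if G.Adj v t then 1 else 0 := by
          simp_rw [h1]
    _ = ∑ v : V, ∑ t ∈ T, if G.Adj v t then 1 else 0 := Finset.sum_comm
    _ = ∑ v : V, (T.filter (G.Adj v)).card := by
          refine Finset.sum_congr rfl (fun v _ => ?_)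
          rw [Finset.card_filter]
    _ ≤ ∑ _v : V, 2 := Finset.sum_le_sum (fun v _ => hnbr v)
    _ = 2 * Fintype.card V := by
          rw [Finset.sum_const, Finset.card_univ, smul_eq_mul, mul_comm]
  -- incidence double counting : E1.card + Ein.card ≤ ∑ t ∈ T, degree t
  have hinc : E1.card + Ein.card ≤ ∑ t ∈ T, G.degree t := by
    have h1 : ∀ t : V, G.degree t = ∑ e ∈ G.edgeFinset, if t ∈ e then 1 else 0 := by
      intro t
      rw [← SimpleGraph.card_incidenceFinset_eq_degree, SimpleGraph.incidenceFinset_eq_filter,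
        Finset.card_filter]
    have h2 : ∑ t ∈ T, G.degree t = ∑ e ∈ G.edgeFinset, (T.filter (fun t => t ∈ e)).card := by
      calc ∑ t ∈ T, G.degree t = ∑ t ∈ T, ∑ e ∈ G.edgeFinset, if t ∈ e then 1 else 0 := by
            simp_rw [h1]
      _ = ∑ e ∈ G.edgeFinset, ∑ t ∈ T, if t ∈ e then 1 else 0 := Finset.sum_comm
      _ = ∑ e ∈ G.edgeFinset, (T.filter (fun t => t ∈ e)).card := by
            refine Finset.sum_congr rfl (fun e _ => ?_)
            rw [Finset.card_filter]
    rw [h2]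
    have hsub1 : Ein ⊆ E1 := by
      intro e he
      rw [hEin, Finset.mem_filter] at he
      rw [hE1, Finset.mem_filter]
      refine ⟨he.1, ?_⟩
      obtain ⟨⟨x, y⟩, rfl⟩ := e.exists_rep
      exact ⟨x, by simp, he.2 x (by simp)⟩
    have hEsub : E1 ⊆ G.edgeFinset := Finset.filter_subset _ _
    have hlow : ∀ e ∈ E1, 1 ≤ (T.filter (fun t => t ∈ e)).card := by
      intro e he
      rw [hE1, Finset.mem_filter] at he
      obtain ⟨x, hx, hxT⟩ := he.2
      exact Finset.card_pos.mpr ⟨x, Finset.mem_filter.mpr ⟨hxT, hx⟩⟩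
    have hlow2 : ∀ e ∈ Ein, 2 ≤ (T.filter (fun t => t ∈ e)).card := by
      intro e he
      rw [hEin, Finset.mem_filter] at he
      obtain ⟨⟨x, y⟩, rfl⟩ := e.exists_rep
      have hadjxy : G.Adj x y := by
        have := he.1
        rwa [SimpleGraph.mem_edgeFinset, SimpleGraph.mem_edgeSet] at this
      have hxy : x ≠ y := hadjxy.ne
      have : ({x, y} : Finset V) ⊆ T.filter (fun t => t ∈ (s(x, y) : Sym2 V)) := by
        intro w hw
        simp only [Finset.mem_insert, Finset.mem_singleton] at hw
        rcases hw with rfl | rfl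
        · exact Finset.mem_filter.mpr ⟨he.2 w (by simp), by simp⟩
        · exact Finset.mem_filter.mpr ⟨he.2 w (by simp), by simp⟩
      calc 2 = ({x, y} : Finset V).card := (Finset.card_pair hxy).symm
      _ ≤ _ := Finset.card_le_card this
    calc E1.card + Ein.card
        = (E1 \ Ein).card + Ein.card + Ein.card := by
          rw [Finset.card_sdiff_add_card_eq_card hsub1]
    _ ≤ ∑ e ∈ E1 \ Ein, (T.filter (fun t => t ∈ e)).card
          + ∑ e ∈ Ein, (T.filter (fun t => t ∈ e)).card := by
          have b1 : (E1 \ Ein).card ≤ ∑ e ∈ E1 \ Ein, (T.filter (fun t => t ∈ e)).card := by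
            rw [Finset.card_eq_sum_ones]
            exact Finset.sum_le_sum (fun e he => hlow e (Finset.mem_sdiff.mp he).1)
          have b2 : Ein.card + Ein.card ≤ ∑ e ∈ Ein, (T.filter (fun t => t ∈ e)).card := by
            have : Ein.card + Ein.card = ∑ _e ∈ Ein, 2 := by
              rw [Finset.sum_const, smul_eq_mul]; omega
            rw [this]
            exact Finset.sum_le_sum hlow2
          omega
    _ = ∑ e ∈ (E1 \ Ein) ∪ Ein, (T.filter (fun t => t ∈ e)).card := by
          rw [Finset.sum_union Finset.sdiff_disjoint]
    _ = ∑ e ∈ E1, (T.filter (fun t => t ∈ e)).card := by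
          rw [Finset.sdiff_union_of_subset hsub1]
    _ ≤ ∑ e ∈ G.edgeFinset, (T.filter (fun t => t ∈ e)).card :=
          Finset.sum_le_sum_of_subset hEsub
  -- outside edges : Mantel
  have hEoutM : 4 * Eout.card ≤ (Fintype.card V - L) ^ 2 := by
    have heq : Eout = G.edgeFinset.filter (fun e => ∀ x ∈ e, x ∈ Finset.univ \ T) := by
      rw [hEout]
      apply Finset.filter_congr
      intro e _
      push_neg
      constructor
      · intro h x hx
        exact Finset.mem_sdiff.mpr ⟨Finset.mem_univ x, h x hx⟩
      · intro h x hx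
        exact (Finset.mem_sdiff.mp (h x hx)).2
    have hcard : (Finset.univ \ T).card = Fintype.card V - L := by
      rw [Finset.card_sdiff_of_subset (Finset.subset_univ _), Finset.card_univ, hTcard]
    calc 4 * Eout.card = 4 * (G.edgeFinset.filter (fun e => ∀ x ∈ e, x ∈ Finset.univ \ T)).card := by
          rw [heq]
    _ ≤ (Finset.univ \ T).card ^ 2 := mantel_finset htf _
    _ = (Fintype.card V - L) ^ 2 := by rw [hcard]
  refine ⟨L, hLodd, hL5, by omega, ?_⟩
  omega

end NbcAux

/-- If `G_1, …, G_{2s}` are triangle-free, non-bipartite graphs on a common vertex set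
of size `4s + 1` such that every pair of distinct vertices is an edge of at least `s`
of them, then `s ≤ 1`. -/
theorem nonbipartite_cover (s : ℕ) (hs : 0 < s)
    (G : Fin (2 * s) → SimpleGraph (Fin (4 * s + 1)))
    (htf : ∀ i, (G i).CliqueFree 3)
    (hnb : ∀ i, ¬ (G i).Colorable 2)
    (hcover : ∀ u v : Fin (4 * s + 1), u ≠ v →
      s ≤ (Finset.univ.filter fun i => (G i).Adj u v).card) :
    s ≤ 1 := by
  have hcardV : Fintype.card (Fin (4 * s + 1)) = 4 * s + 1 := by simp
  -- degree double counting
  have hdeg : ∀ u : Fin (4 * s + 1),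
      4 * s * s ≤ ∑ i : Fin (2 * s), (G i).degree u := by
    intro u
    have h1 : ∀ i : Fin (2 * s), (G i).degree u =
        ∑ v : Fin (4 * s + 1), if (G i).Adj u v then 1 else 0 := by
      intro i
      rw [← SimpleGraph.card_neighborFinset_eq_degree]
      have : (G i).neighborFinset u = Finset.univ.filter (fun v => (G i).Adj u v) := by
        ext v; simp [SimpleGraph.mem_neighborFinset]
      rw [this, Finset.card_filter]
    calc 4 * s * s = ∑ _v ∈ Finset.univ.erase u, s := by
          rw [Finset.sum_const, Finset.card_erase_of_mem (Finset.mem_univ u),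
            Finset.card_univ, hcardV, smul_eq_mul]
          have h41 : 4 * s + 1 - 1 = 4 * s := by omega
          rw [h41]
    _ ≤ ∑ v ∈ Finset.univ.erase u,
          (Finset.univ.filter fun i => (G i).Adj u v).card := by
          refine Finset.sum_le_sum (fun v hv => ?_)
          exact hcover u v (Ne.symm (Finset.mem_erase.mp hv).1)
    _ ≤ ∑ v : Fin (4 * s + 1), (Finset.univ.filter fun i => (G i).Adj u v).card := by
          exact Finset.sum_le_sum_of_subset (Finset.erase_subset _ _)
    _ = ∑ v : Fin (4 * s + 1), ∑ i : Fin (2 * s), if (G i).Adj u v then 1 else 0 := by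
          refine Finset.sum_congr rfl (fun v _ => ?_)
          rw [Finset.card_filter]
    _ = ∑ i : Fin (2 * s), ∑ v : Fin (4 * s + 1), if (G i).Adj u v then 1 else 0 :=
          Finset.sum_comm
    _ = ∑ i : Fin (2 * s), (G i).degree u := by
          refine Finset.sum_congr rfl (fun i _ => ?_)
          rw [h1]
  have htot : (4 * s + 1) * (4 * s * s) ≤
      ∑ i : Fin (2 * s), 2 * (G i).edgeFinset.card := by
    calc (4 * s + 1) * (4 * s * s) = ∑ _u : Fin (4 * s + 1), 4 * s * s := by
          rw [Finset.sum_const, Finset.card_univ, hcardV, smul_eq_mul]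
    _ ≤ ∑ u : Fin (4 * s + 1), ∑ i : Fin (2 * s), (G i).degree u :=
          Finset.sum_le_sum (fun u _ => hdeg u)
    _ = ∑ i : Fin (2 * s), ∑ u : Fin (4 * s + 1), (G i).degree u := Finset.sum_comm
    _ = ∑ i : Fin (2 * s), 2 * (G i).edgeFinset.card := by
          refine Finset.sum_congr rfl (fun i _ => ?_)
          exact (G i).sum_degrees_eq_twice_card_edges
  -- pigeonhole
  have hne : (Finset.univ : Finset (Fin (2 * s))).Nonempty :=
    ⟨⟨0, by omega⟩, Finset.mem_univ _⟩
  have hpig : ∃ i : Fin (2 * s), 2 * s * (4 * s + 1) ≤ 2 * (G i).edgeFinset.card := by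
    by_contra hc
    push_neg at hc
    have : ∑ i : Fin (2 * s), 2 * (G i).edgeFinset.card <
        ∑ _i : Fin (2 * s), 2 * s * (4 * s + 1) := by
      exact Finset.sum_lt_sum_of_nonempty hne (fun i _ => hc i)
    rw [Finset.sum_const, Finset.card_univ, Fintype.card_fin, smul_eq_mul] at this
    nlinarith
  obtain ⟨i, hi⟩ := hpig
  obtain ⟨L, hLodd, hL5, hLn, hbound⟩ := edge_bound (htf i) (hnb i)
  rw [hcardV] at hLn hbound
  have hsq : (4 * s + 1 - L) ^ 2 ≤ (4 * s + 1 - 5) ^ 2 :=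
    Nat.pow_le_pow_left (Nat.sub_le_sub_left hL5 _) 2
  obtain ⟨t, rfl⟩ : ∃ t, s = t + 1 := ⟨s - 1, by omega⟩
  have h5 : 4 * (t + 1) + 1 - 5 = 4 * t := by omega
  rw [h5] at hsq
  have hsq' : (4 * t) ^ 2 = 16 * (t * t) := by ring
  rw [hsq'] at hsq
  have hlow : 2 * (t + 1) * (4 * (t + 1) + 1) ≤ 2 * (G i).edgeFinset.card := hi
  nlinarith [hbound, hsq, hlow, hL5]
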